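/- arXiv:2509.03927 — 4 statements merged into one kernel-verified Lean document; each statement's English description precedes it below -/
import Mathlib

section
/- Let (G_n)_{n∈ℕ} be an inverse system of finite nilpotent groups with surjective transition maps, let G = lim← G_n be the inverse limit with canonical surjective projections π_n : G → G_n, and set S_n = π_n(ker π_{n−1}) ≤ G_n. If there exists n₀ ∈ ℕ such that S_n ≤ G_n′ (the commutator subgroup of G_n) for all n ≥ n₀, then G is topologically finitely generated; moreover, for any generating set T_{n₀} of G_{n₀}, every extension T ⊆ G of T_{n₀} topologically generates G (in the congruence topology), and g(G) = g(G_{n₀}). -/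
namespace InvLim

variable {Gn : ℕ → Type*} [∀ n, Group (Gn n)]

/-- The inverse limit of an `ℕ`-indexed inverse system of groups with transition maps
`f n : G_{n+1} →* G_n`, realized as the subgroup of compatible sequences in the product. -/
def invLim (Gn : ℕ → Type*) [∀ n, Group (Gn n)] (f : ∀ n, Gn (n + 1) →* Gn n) :
    Subgroup (∀ n, Gn n) where
  carrier := {x | ∀ n, f n (x (n + 1)) = x n}
  one_mem' := fun n => by simp
  mul_mem' := by
    intro x y hx hy n
    simp only [Pi.mul_apply, map_mul, hx n, hy n]
  inv_mem' := by
    intro x hx n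
    simp only [Pi.inv_apply, map_inv, hx n]

/-- The canonical projection `π_n : lim← G_n → G_n`. -/
def plim (Gn : ℕ → Type*) [∀ n, Group (Gn n)] (f : ∀ n, Gn (n + 1) →* Gn n) (n : ℕ) :
    ↥(invLim Gn f) →* Gn n :=
  (Pi.evalMonoidHom Gn n).comp (invLim Gn f).subtype

/-- The congruence topology on the inverse limit: the topology induced from the product of
the discrete topologies, for which the kernels `ker π_n` form a base of open neighborhoods
of the identity. -/
instance invLimTopology (Gn : ℕ → Type*) [∀ n, Group (Gn n)] (f : ∀ n, Gn (n + 1) →* Gn n) :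
    TopologicalSpace ↥(invLim Gn f) :=
  TopologicalSpace.induced (Subtype.val) (@Pi.topologicalSpace ℕ Gn (fun _ => ⊥))

end InvLim

/-!
In a finite nilpotent group every maximal subgroup is normal with a simple nilpotent, hence
abelian, quotient; so the commutator subgroup lies in the Frattini subgroup, and a subgroup `K`
with `K ⊔ G' = G` is all of `G`. If `H ≤ lim← G_n` maps onto `G_n` and `n + 1 ≥ n₀`, every element
of `G_{n+1}` is an element of `π_{n+1}(ker π_n) = S_{n+1} ≤ G_{n+1}'` times an element of
`π_{n+1}(H)`, so `H` maps onto `G_{n+1}` too. Thus a subgroup mapping onto `G_{n₀}` maps onto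
every `G_n`, i.e. it is dense in the congruence topology. Conversely a dense subgroup maps onto
`G_{n₀}`, and generators of `G_{n₀}` lift injectively to `lim← G_n`; this gives `g(G) = g(G_{n₀})`.
-/

theorem commutator_le_of_isCoatom {G : Type*} [Group G] [Group.IsNilpotent G]
    {K : Subgroup G} (hK : IsCoatom K) : commutator G ≤ K := by
  have : K.Normal :=
    Subgroup.NormalizerCondition.normal_of_coatom K Group.normalizerCondition_of_isNilpotent hK
  have : IsSimpleOrder (Set.Ici K) := Set.isSimpleOrder_Ici_iff_isCoatom.2 hK
  have : IsSimpleOrder (Subgroup (G ⧸ K)) :=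
    OrderIso.isSimpleOrder (β := Set.Ici K) (QuotientGroup.comapMk'OrderIso K)
  have : IsSimpleGroup (G ⧸ K) :=
    { toNontrivial := Subgroup.nontrivial_iff.1 inferInstance
      eq_bot_or_eq_top_of_normal := fun H _ => eq_bot_or_eq_top H }
  exact Subgroup.Normal.quotient_commutative_iff_commutator_le.1
    ⟨⟨IsSimpleGroup.comm_iff_isSolvable.2 inferInstance⟩⟩

theorem commutator_le_frattini {G : Type*} [Group G] [Group.IsNilpotent G] :
    commutator G ≤ frattini G :=
  le_iInf₂ fun _ => commutator_le_of_isCoatom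

theorem eq_top_of_sup_commutator_eq_top {G : Type*} [Group G] [Finite G] [Group.IsNilpotent G]
    {K : Subgroup G} (h : K ⊔ commutator G = ⊤) : K = ⊤ :=
  frattini_nongenerating (top_le_iff.1 (h ▸ sup_le_sup_left commutator_le_frattini K))

namespace InvLim

section

variable {Gn : ℕ → Type*} [∀ n, Group (Gn n)] {f : ∀ n, Gn (n + 1) →* Gn n}

theorem f_comp_plim (n : ℕ) : (f n).comp (plim Gn f (n + 1)) = plim Gn f n :=
  MonoidHom.ext fun x => x.2 n

theorem plim_eq_of_le {m N : ℕ} (h : m ≤ N) {x y : invLim Gn f}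
    (hxy : plim Gn f N x = plim Gn f N y) : plim Gn f m x = plim Gn f m y := by
  induction N, h using Nat.le_induction with
  | base => exact hxy
  | succ N _ ih => exact ih (by rw [← f_comp_plim, MonoidHom.comp_apply, hxy]; rfl)

noncomputable def liftLevel (hf : ∀ n, Function.Surjective (f n)) {n m : ℕ} (h : n ≤ m)
    (g : Gn n) : Gn m :=
  Nat.leRecOn h (fun {k} => Function.surjInv (hf k)) g

theorem liftLevel_self (hf : ∀ n, Function.Surjective (f n)) {n : ℕ} (g : Gn n) :
    liftLevel hf le_rfl g = g :=
  Nat.leRecOn_self g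

theorem map_liftLevel_succ (hf : ∀ n, Function.Surjective (f n)) {n m : ℕ} (h : n ≤ m)
    (h' : n ≤ m + 1) (g : Gn n) : f m (liftLevel hf h' g) = liftLevel hf h g := by
  rw [liftLevel, Nat.leRecOn_succ h]
  exact Function.surjInv_eq (hf m) _

theorem plim_surjective (hf : ∀ n, Function.Surjective (f n)) :
    ∀ n, Function.Surjective (plim Gn f n)
  | 0 => fun g =>
    ⟨⟨fun m => liftLevel hf m.zero_le g, fun m => map_liftLevel_succ hf _ _ g⟩,
      liftLevel_self hf g⟩
  | n + 1 => fun g => by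
    obtain ⟨x, hx⟩ := plim_surjective hf n (f n g)
    refine ⟨⟨fun m => if h : m ≤ n then x.1 m else liftLevel hf (Nat.lt_of_not_le h) g,
      fun m => ?_⟩, by simp [plim, liftLevel_self]⟩
    dsimp only
    split_ifs with h₁ h₂ h₂
    · exact x.2 m
    · omega
    · obtain rfl : m = n := by omega
      rw [liftLevel_self]
      exact hx.symm
    · exact map_liftLevel_succ hf _ _ g

theorem isOpen_plim_preimage (n : ℕ) (s : Set (Gn n)) : IsOpen (plim Gn f n ⁻¹' s) := by
  let _ : ∀ n, TopologicalSpace (Gn n) := fun _ => ⊥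
  have : DiscreteTopology (Gn n) := ⟨rfl⟩
  exact ((continuous_apply n).comp continuous_induced_dom).isOpen_preimage s (isOpen_discrete s)

theorem dense_iff_forall_image_plim_eq_univ (hf : ∀ n, Function.Surjective (f n))
    {S : Set (invLim Gn f)} : Dense S ↔ ∀ n, plim Gn f n '' S = Set.univ := by
  constructor
  · intro hS n
    refine Set.eq_univ_of_forall fun g => ?_
    obtain ⟨x, rfl⟩ := plim_surjective hf n g
    obtain ⟨y, hy, hyS⟩ :=
      hS.inter_open_nonempty _ (isOpen_plim_preimage n {plim Gn f n x}) ⟨x, rfl⟩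
    exact ⟨y, hyS, hy⟩
  · intro hS
    let _ : ∀ n, TopologicalSpace (Gn n) := fun _ => ⊥
    have : ∀ n, DiscreteTopology (Gn n) := fun _ => ⟨rfl⟩
    refine dense_iff_inter_open.2 fun U hU ⟨x, hxU⟩ => ?_
    obtain ⟨V, hV, rfl⟩ := isOpen_induced_iff.1 hU
    -- `V` contains a cylinder around `x` fixing finitely many coordinates `I`
    obtain ⟨I, u, hu, hIV⟩ := isOpen_pi_iff.1 hV x.1 hxU
    obtain ⟨y, hyS, hy⟩ : plim Gn f (I.sup id) x ∈ plim Gn f (I.sup id) '' S :=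
      hS _ ▸ Set.mem_univ _
    refine ⟨y, hIV fun i hi => ?_, hyS⟩
    have hyx : y.1 i = x.1 i := plim_eq_of_le (Finset.le_sup (f := id) hi) hy
    exact hyx ▸ (hu i hi).2

theorem image_plim_eq_univ_of_le (hf : ∀ n, Function.Surjective (f n))
    {S : Set (invLim Gn f)} {m N : ℕ} (h : m ≤ N) (hN : plim Gn f N '' S = Set.univ) :
    plim Gn f m '' S = Set.univ := by
  refine Set.eq_univ_of_forall fun g => ?_
  obtain ⟨x, rfl⟩ := plim_surjective hf m g
  obtain ⟨y, hyS, hy⟩ := hN ▸ Set.mem_univ (plim Gn f N x)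
  exact ⟨y, hyS, plim_eq_of_le h hy⟩

theorem map_plim_succ_eq_top {n : ℕ} [Finite (Gn (n + 1))] [Group.IsNilpotent (Gn (n + 1))]
    (hf : ∀ n, Function.Surjective (f n))
    (hS : (plim Gn f n).ker.map (plim Gn f (n + 1)) ≤ commutator (Gn (n + 1)))
    {H : Subgroup (invLim Gn f)} (hH : H.map (plim Gn f n) = ⊤) :
    H.map (plim Gn f (n + 1)) = ⊤ := by
  refine eq_top_of_sup_commutator_eq_top (eq_top_iff.2 fun g _ => ?_)
  obtain ⟨x, rfl⟩ := plim_surjective hf (n + 1) g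
  obtain ⟨y, hyH, hy⟩ := hH ▸ Subgroup.mem_top (plim Gn f n x)
  have hxy : plim Gn f (n + 1) (x * y⁻¹) ∈ commutator (Gn (n + 1)) :=
    hS ⟨x * y⁻¹, (MonoidHom.mem_ker).2 (by rw [map_mul, map_inv, hy, mul_inv_cancel]), rfl⟩
  have hx : plim Gn f (n + 1) x = plim Gn f (n + 1) (x * y⁻¹) * plim Gn f (n + 1) y := by
    rw [map_mul, map_inv, inv_mul_cancel_right]
  exact hx ▸ mul_mem (Subgroup.mem_sup_right hxy) (Subgroup.mem_sup_left ⟨y, hyH, rfl⟩)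

theorem dense_of_map_plim_eq_top [∀ n, Finite (Gn n)] (hnil : ∀ n, Group.IsNilpotent (Gn n))
    (hf : ∀ n, Function.Surjective (f n)) {n₀ : ℕ}
    (hS : ∀ n, n₀ ≤ n → (plim Gn f (n - 1)).ker.map (plim Gn f n) ≤ commutator (Gn n))
    {H : Subgroup (invLim Gn f)} (hH : H.map (plim Gn f n₀) = ⊤) :
    Dense (H : Set (invLim Gn f)) := by
  have hup : ∀ N, n₀ ≤ N → H.map (plim Gn f N) = ⊤ := by
    intro N hN
    induction N, hN using Nat.le_induction with
    | base => exact hH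
    | succ N hN ih =>
      have := hnil (N + 1)
      exact map_plim_succ_eq_top hf (hS (N + 1) (by omega)) ih
  refine (dense_iff_forall_image_plim_eq_univ hf).2 fun n =>
    image_plim_eq_univ_of_le hf (le_max_left n n₀) ?_
  rw [← Subgroup.coe_map, hup _ (le_max_right n n₀), Subgroup.coe_top]

theorem exists_finset_card_eq_dense_closure [∀ n, Finite (Gn n)]
    (hnil : ∀ n, Group.IsNilpotent (Gn n)) (hf : ∀ n, Function.Surjective (f n)) {n₀ : ℕ}
    (hS : ∀ n, n₀ ≤ n → (plim Gn f (n - 1)).ker.map (plim Gn f n) ≤ commutator (Gn n))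
    (S₀ : Finset (Gn n₀)) (h₀ : Subgroup.closure (S₀ : Set (Gn n₀)) = ⊤) :
    ∃ S : Finset (invLim Gn f), S.card = S₀.card ∧
      Dense (Subgroup.closure (S : Set (invLim Gn f)) : Set (invLim Gn f)) := by
  classical
  obtain ⟨σ, hσ⟩ := (plim_surjective hf n₀).hasRightInverse
  refine ⟨S₀.image σ, Finset.card_image_of_injective _ hσ.injective,
    dense_of_map_plim_eq_top hnil hf hS ?_⟩
  rw [MonoidHom.map_closure, Finset.coe_image, hσ.image_image, h₀]

end

/-- Let `(G_n)` be an inverse system of finite nilpotent groups with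
surjective transition maps, `G = lim← G_n` its inverse limit with projections `π_n`, and
`S_n = π_n(ker π_{n-1})`.  If there is `n₀` with `S_n ≤ G_n'` for all `n ≥ n₀`, then `G` is
topologically finitely generated; moreover every extension `T ⊆ G` of a generating set
`T_{n₀}` of `G_{n₀}` topologically generates `G`, and `g(G) = g(G_{n₀})`. -/
theorem statement_4 (Gn : ℕ → Type*) [∀ n, Group (Gn n)] [∀ n, Finite (Gn n)]
    (hnil : ∀ n, Group.IsNilpotent (Gn n))
    (f : ∀ n, Gn (n + 1) →* Gn n) (hf : ∀ n, Function.Surjective (f n))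
    (n₀ : ℕ)
    (hS : ∀ n, n₀ ≤ n →
      ((plim Gn f (n - 1)).ker.map (plim Gn f n)) ≤ commutator (Gn n)) :
    (∃ S : Set ↥(invLim Gn f), S.Finite ∧
        Dense ((Subgroup.closure S : Subgroup ↥(invLim Gn f)) : Set ↥(invLim Gn f))) ∧
    (∀ T₀ : Set (Gn n₀), Subgroup.closure T₀ = ⊤ →
      ∀ T : Set ↥(invLim Gn f), Set.BijOn (plim Gn f n₀) T T₀ →
        Dense ((Subgroup.closure T : Subgroup ↥(invLim Gn f)) : Set ↥(invLim Gn f))) ∧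
    sInf {k : ℕ | ∃ S : Finset ↥(invLim Gn f), S.card = k ∧
        Dense ((Subgroup.closure (S : Set ↥(invLim Gn f)) :
          Subgroup ↥(invLim Gn f)) : Set ↥(invLim Gn f))}
      = sInf {k : ℕ | ∃ S : Finset (Gn n₀), S.card = k ∧
          Subgroup.closure (S : Set (Gn n₀)) = ⊤} := by
  classical
  have := Fintype.ofFinite (Gn n₀)
  have hlift := exists_finset_card_eq_dense_closure hnil hf hS
  obtain ⟨S₁, -, hS₁⟩ := hlift Finset.univ (by simp)
  refine ⟨⟨S₁, S₁.finite_toSet, hS₁⟩, fun T₀ hT₀ T hT => dense_of_map_plim_eq_top hnil hf hS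
    (by rw [MonoidHom.map_closure, hT.image_eq, hT₀]), le_antisymm ?_ ?_⟩
  · refine le_csInf ⟨_, Finset.univ, rfl, by simp⟩ ?_
    rintro _ ⟨S₀, rfl, hgen⟩
    obtain ⟨S, hcard, hd⟩ := hlift S₀ hgen
    exact Nat.sInf_le ⟨S, hcard, hd⟩
  · refine le_csInf ⟨_, S₁, rfl, hS₁⟩ ?_
    rintro _ ⟨S, rfl, hd⟩
    refine le_trans ?_ (Finset.card_image_le (s := S) (f := plim Gn f n₀))
    refine Nat.sInf_le ⟨_, rfl, ?_⟩
    rw [Finset.coe_image, ← MonoidHom.map_closure, ← Subgroup.coe_eq_univ, Subgroup.coe_map]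
    exact (dense_iff_forall_image_plim_eq_univ hf).1 hd n₀

end InvLim
end

section
/- Let 𝒢 be a topological group, G a subgroup of 𝒢, cl(G) the closure of G in 𝒢, and H a closed subgroup of cl(G) of finite index [cl(G) : H] < ∞. Then cl(G ∩ H) = H, where cl denotes closure in 𝒢. -/
/-!
A closed subgroup of finite index is open, so `H` is relatively open in `cl(G)`: `H = W ∩ cl(G)` for
some open `W ⊆ 𝒢`. Since `G` is dense in `cl(G)`, every point of `W ∩ cl(G)` is a limit of points of
`W ∩ G ⊆ G ∩ H`.
-/

theorem subset_closure_inter_of_isOpen_preimage_val {X : Type*} [TopologicalSpace X]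
    {s t u : Set X} (hst : s ⊆ t) (hts : t ⊆ closure s) (hut : u ⊆ t)
    (hu : IsOpen (Subtype.val ⁻¹' u : Set t)) : u ⊆ closure (s ∩ u) := by
  obtain ⟨W, hW, hWu⟩ := isOpen_induced_iff.mp hu
  have hWt : W ∩ t = u := by
    rw [Set.inter_comm, ← Subtype.image_preimage_coe, hWu, Subtype.image_preimage_coe,
      Set.inter_eq_right.mpr hut]
  calc u = W ∩ t := hWt.symm
    _ ⊆ closure (W ∩ s) := (Set.inter_subset_inter_right W hts).trans hW.inter_closure
    _ ⊆ closure (s ∩ u) := closure_mono fun x ⟨hxW, hxs⟩ => ⟨hxs, hWt ▸ ⟨hxW, hst hxs⟩⟩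

theorem Subgroup.isOpen_preimage_val_of_isClosed_of_relIndex_ne_zero {𝒢 : Type*} [Group 𝒢]
    [TopologicalSpace 𝒢] [IsTopologicalGroup 𝒢] {H K : Subgroup 𝒢} (hH : IsClosed (H : Set 𝒢))
    (hHK : H.relIndex K ≠ 0) : IsOpen (Subtype.val ⁻¹' (H : Set 𝒢) : Set K) :=
  have : (H.subgroupOf K).FiniteIndex := ⟨hHK⟩
  (H.subgroupOf K).isOpen_of_isClosed_of_finiteIndex (hH.preimage continuous_subtype_val)

/-- Let `𝒢` be a topological group, `G ≤ 𝒢` a subgroup, `cl(G)` its closure,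
and `H` a closed subgroup of `cl(G)` of finite index.  Then `cl(G ∩ H) = H`. -/
theorem statement_7 {𝒢 : Type*} [Group 𝒢] [TopologicalSpace 𝒢] [IsTopologicalGroup 𝒢]
    (G H : Subgroup 𝒢) (hHcl : IsClosed (H : Set 𝒢)) (hle : H ≤ G.topologicalClosure)
    (hfin : H.relIndex G.topologicalClosure ≠ 0) :
    closure ((G ⊓ H : Subgroup 𝒢) : Set 𝒢) = (H : Set 𝒢) := by
  refine (closure_minimal Set.inter_subset_right hHcl).antisymm ?_
  exact subset_closure_inter_of_isOpen_preimage_val G.le_topologicalClosure subset_rfl hle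
    (Subgroup.isOpen_preimage_val_of_isClosed_of_relIndex_ne_zero hHcl hfin)
end

section
/- Let 𝒢 be a topological group and let K ≤ H be subgroups of 𝒢 with [H : K] finite. Then [cl(H) : cl(K)] ≤ [H : K], where cl denotes topological closure in 𝒢. -/
/-! If `h₁ K, …, hₙ K` are the cosets of `K` in `H`, the finite union `⋃ hᵢ • cl K` is closed and
contains `H`, hence `cl H`; so every coset of `cl K` in `cl H` is some `hᵢ cl K`. -/

open scoped Pointwise

namespace Subgroup

variable {G : Type*} [Group G]

theorem relIndex_le_of_subset_mul {H K H' K' : Subgroup G} (hH : H ≤ H') (hK : K ≤ K')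
    (hcover : (H' : Set G) ⊆ H * K') (hfin : K.relIndex H ≠ 0) :
    K'.relIndex H' ≤ K.relIndex H := by
  have : (K.subgroupOf H).FiniteIndex := ⟨hfin⟩
  let f : H ⧸ K.subgroupOf H → H' ⧸ K'.subgroupOf H' :=
    Quotient.map' (inclusion hH) fun a b hab => by
      rw [QuotientGroup.leftRel_apply] at hab ⊢
      exact hK hab
  refine Nat.card_le_card_of_surjective f ?_
  rintro ⟨x, hx⟩
  obtain ⟨h, hh, k, hk, rfl⟩ := hcover hx
  refine ⟨QuotientGroup.mk ⟨h, hh⟩, QuotientGroup.eq.mpr ?_⟩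
  simpa [mem_subgroupOf] using hk

theorem coe_subset_iUnion_out_smul (H K : Subgroup G) :
    (H : Set G) ⊆ ⋃ q : H ⧸ K.subgroupOf H, ((q.out : H) : G) • (K : Set G) := by
  intro h hh
  refine Set.mem_iUnion.mpr ⟨QuotientGroup.mk ⟨h, hh⟩, ?_⟩
  have hq : (QuotientGroup.mk ⟨h, hh⟩ : H ⧸ K.subgroupOf H).out⁻¹ * ⟨h, hh⟩ ∈ K.subgroupOf H :=
    QuotientGroup.eq.mp (QuotientGroup.out_eq' _)
  exact ⟨_, hq, by simp [smul_eq_mul]⟩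

theorem topologicalClosure_subset_mul [TopologicalSpace G] [IsTopologicalGroup G]
    {H K : Subgroup G} (hfin : K.relIndex H ≠ 0) :
    (H.topologicalClosure : Set G) ⊆ H * K.topologicalClosure := by
  have : (K.subgroupOf H).FiniteIndex := ⟨hfin⟩
  calc (H.topologicalClosure : Set G)
      ⊆ ⋃ q : H ⧸ K.subgroupOf H, ((q.out : H) : G) • (K.topologicalClosure : Set G) :=
        closure_minimal
          ((coe_subset_iUnion_out_smul H K).trans
            (Set.iUnion_mono fun q => Set.smul_set_mono K.le_topologicalClosure))
          (isClosed_iUnion_of_finite fun q => K.isClosed_topologicalClosure.smul _)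
    _ ⊆ H * K.topologicalClosure :=
        Set.iUnion_subset fun q => Set.smul_set_subset_mul (q.out : H).2

end Subgroup

theorem statement_8_general {𝒢 : Type*} [Group 𝒢] [TopologicalSpace 𝒢] [IsTopologicalGroup 𝒢]
    (H K : Subgroup 𝒢) (hfin : K.relIndex H ≠ 0) :
    K.topologicalClosure.relIndex H.topologicalClosure ≤ K.relIndex H :=
  Subgroup.relIndex_le_of_subset_mul H.le_topologicalClosure K.le_topologicalClosure
    (Subgroup.topologicalClosure_subset_mul hfin) hfin

/-- Let `𝒢` be a topological group and `K ≤ H ≤ 𝒢` with `[H : K]` finite.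
Then `[cl(H) : cl(K)] ≤ [H : K]`. -/
theorem statement_8 {𝒢 : Type*} [Group 𝒢] [TopologicalSpace 𝒢] [IsTopologicalGroup 𝒢]
    (H K : Subgroup 𝒢) (hKH : K ≤ H) (hfin : K.relIndex H ≠ 0) :
    K.topologicalClosure.relIndex H.topologicalClosure ≤ K.relIndex H :=
  statement_8_general H K hfin
end

section
/- Let p be a prime, T the p-regular rooted tree, and G ≤ W_p an infinite self-similar subgroup, where W_p = {g ∈ Aut(T) : for every vertex v, the action of g|_v on the first level is a power of the cycle (1 2 … p)}. Then G is level-transitive, i.e. G acts transitively on every level of T. -/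
theorem Equiv.Perm.apply_inv_self {α : Type*} (f : Equiv.Perm α) (x : α) : f (f⁻¹ x) = x :=
  Equiv.apply_symm_apply f x

theorem Equiv.Perm.inv_apply_self {α : Type*} (f : Equiv.Perm α) (x : α) : f⁻¹ (f x) = x :=
  Equiv.symm_apply_apply f x

namespace TreeFT

/-- Vertices of the `d`-regular rooted tree: finite words over `Fin d`. -/
abbrev Vertex (d : ℕ) := List (Fin d)

/-- The automorphism group of the `d`-regular rooted tree, realized as the subgroup of
permutations of the vertex set that preserve length (levels) and prefixes (adjacency). -/
def treeAut (d : ℕ) : Subgroup (Equiv.Perm (Vertex d)) where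
  carrier := {g | (∀ v : Vertex d, (g v).length = v.length) ∧
      (∀ v w : Vertex d, (g (v ++ w)).take v.length = g v)}
  one_mem' := ⟨fun _ => rfl, fun v w => List.take_left⟩
  mul_mem' := by
    rintro g h ⟨hg1, hg2⟩ ⟨hh1, hh2⟩
    refine ⟨fun v => by rw [Equiv.Perm.mul_apply, hg1, hh1], fun v w => ?_⟩
    have h1 : h (v ++ w) = h v ++ (h (v ++ w)).drop v.length := by
      conv_lhs => rw [← List.take_append_drop v.length (h (v ++ w))]
      rw [hh2]
    rw [Equiv.Perm.mul_apply, Equiv.Perm.mul_apply, h1]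
    have h2 : v.length = (h v).length := (hh1 v).symm
    rw [h2]
    exact hg2 _ _
  inv_mem' := by
    rintro g ⟨hg1, hg2⟩
    constructor
    · intro v
      have h := hg1 (g⁻¹ v)
      rw [Equiv.Perm.apply_inv_self] at h
      exact h.symm
    · intro v w
      apply g.injective
      have hlen : v.length ≤ (g⁻¹ (v ++ w)).length := by
        have h := hg1 (g⁻¹ (v ++ w))
        rw [Equiv.Perm.apply_inv_self] at h
        rw [← h, List.length_append]
        exact Nat.le_add_right _ _
      have h3 := hg2 ((g⁻¹ (v ++ w)).take v.length) ((g⁻¹ (v ++ w)).drop v.length)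
      rw [List.take_append_drop, Equiv.Perm.apply_inv_self, List.length_take,
        min_eq_left hlen, List.take_left] at h3
      rw [← h3, Equiv.Perm.apply_inv_self]

variable {d : ℕ}

/-- `Aut(T)` as a type. -/
abbrev TAut (d : ℕ) := ↥(treeAut d)

lemma length_apply (g : TAut d) (v : Vertex d) :
    ((g : Equiv.Perm (Vertex d)) v).length = v.length := g.2.1 v

lemma take_apply (g : TAut d) (v w : Vertex d) :
    ((g : Equiv.Perm (Vertex d)) (v ++ w)).take v.length = (g : Equiv.Perm (Vertex d)) v :=
  g.2.2 v w

lemma apply_append (g : TAut d) (v w : Vertex d) :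
    (g : Equiv.Perm (Vertex d)) (v ++ w) =
      (g : Equiv.Perm (Vertex d)) v ++ ((g : Equiv.Perm (Vertex d)) (v ++ w)).drop v.length := by
  conv_lhs => rw [← List.take_append_drop v.length ((g : Equiv.Perm (Vertex d)) (v ++ w))]
  rw [take_apply]

/-- The section `g|_v` of a tree automorphism at the vertex `v`. -/
def sect (g : TAut d) (v : Vertex d) : TAut d :=
  ⟨{ toFun := fun w => ((g : Equiv.Perm (Vertex d)) (v ++ w)).drop v.length
     invFun := fun w =>
       (((g : Equiv.Perm (Vertex d)))⁻¹ ((g : Equiv.Perm (Vertex d)) v ++ w)).drop v.length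
     left_inv := by
       intro w
       show ((g : Equiv.Perm (Vertex d))⁻¹
         ((g : Equiv.Perm (Vertex d)) v ++
           ((g : Equiv.Perm (Vertex d)) (v ++ w)).drop v.length)).drop v.length = w
       rw [← apply_append g v w, Equiv.Perm.inv_apply_self, List.drop_left]
     right_inv := by
       intro w
       show ((g : Equiv.Perm (Vertex d))
         (v ++ ((g : Equiv.Perm (Vertex d))⁻¹
           ((g : Equiv.Perm (Vertex d)) v ++ w)).drop v.length)).drop v.length = w
       have h2 := apply_append g⁻¹ ((g : Equiv.Perm (Vertex d)) v) w
       simp only [InvMemClass.coe_inv] at h2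
       rw [Equiv.Perm.inv_apply_self, length_apply] at h2
       rw [← h2, Equiv.Perm.apply_inv_self, ← length_apply g v, List.drop_left] },
   by
    constructor
    · intro w
      simp only [Equiv.coe_fn_mk, List.length_drop, length_apply, List.length_append]
      omega
    · intro w u
      simp only [Equiv.coe_fn_mk]
      rw [← List.append_assoc]
      have h0 : ((g : Equiv.Perm (Vertex d)) ((v ++ w) ++ u)).take (v ++ w).length
          = (g : Equiv.Perm (Vertex d)) (v ++ w) := take_apply g (v ++ w) u
      have h1 : w.length = (v.length + w.length) - v.length := by omega
      rw [h1, ← List.drop_take, ← List.length_append, h0]⟩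

lemma sect_apply (g : TAut d) (v w : Vertex d) :
    ((sect g v : TAut d) : Equiv.Perm (Vertex d)) w
      = ((g : Equiv.Perm (Vertex d)) (v ++ w)).drop v.length := rfl

lemma sect_mul (g h : TAut d) (v : Vertex d) :
    sect (g * h) v = sect g ((h : Equiv.Perm (Vertex d)) v) * sect h v := by
  apply Subtype.ext
  apply Equiv.ext
  intro w
  simp only [MulMemClass.coe_mul, Equiv.Perm.mul_apply, sect_apply]
  rw [← apply_append h v w, length_apply]

lemma sect_one (v : Vertex d) : sect (1 : TAut d) v = 1 := by
  apply Subtype.ext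
  apply Equiv.ext
  intro w
  simp only [sect_apply, OneMemClass.coe_one, Equiv.Perm.coe_one, id_eq]
  exact List.drop_left

end TreeFT
namespace TreeFT

variable {d : ℕ}

/-- The stabilizer `St(n)` of the `n`-th level: automorphisms acting trivially on the first
`n` levels of the tree. -/
def lst (d n : ℕ) : Subgroup (TAut d) where
  carrier := {g | ∀ v : Vertex d, v.length ≤ n → (g : Equiv.Perm (Vertex d)) v = v}
  one_mem' := fun _ _ => rfl
  mul_mem' := by
    intro g h hg hh v hv
    show (g : Equiv.Perm (Vertex d)) ((h : Equiv.Perm (Vertex d)) v) = v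
    rw [hh v hv, hg v hv]
  inv_mem' := by
    intro g hg v hv
    show ((g : Equiv.Perm (Vertex d)))⁻¹ v = v
    apply (g : Equiv.Perm (Vertex d)).injective
    rw [Equiv.Perm.apply_inv_self, hg v hv]

lemma mem_lst {g : TAut d} {n : ℕ} :
    g ∈ lst d n ↔ ∀ v : Vertex d, v.length ≤ n → (g : Equiv.Perm (Vertex d)) v = v :=
  Iff.rfl

instance lst_normal (d n : ℕ) : (lst d n).Normal := by
  constructor
  intro s hs g v hv
  show (g : Equiv.Perm (Vertex d))
    ((s : Equiv.Perm (Vertex d)) (((g : Equiv.Perm (Vertex d)))⁻¹ v)) = v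
  have h1 : ((g⁻¹ : TAut d) : Equiv.Perm (Vertex d)) v = ((g : Equiv.Perm (Vertex d)))⁻¹ v := by
    simp
  have h2 : (((g : Equiv.Perm (Vertex d)))⁻¹ v).length ≤ n := by
    rw [← h1, length_apply]; exact hv
  rw [hs _ h2, Equiv.Perm.apply_inv_self]

/-- `Aut(T^n)`, the automorphism group of the finite tree consisting of the first `n` levels,
realized as the quotient of `Aut(T)` by the `n`-th level stabilizer. -/
abbrev FAut (d n : ℕ) := TAut d ⧸ lst d n

/-- `π_n : Aut(T) → Aut(T^n)`, restriction to the first `n` levels. -/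
def proj (d n : ℕ) : TAut d →* FAut d n := QuotientGroup.mk' (lst d n)

lemma proj_surjective (d n : ℕ) : Function.Surjective (proj d n) :=
  QuotientGroup.mk'_surjective _

/-- The group of finite type `G_P` of depth `D` with pattern group `P ≤ Aut(T^D)`:
all tree automorphisms whose section at every vertex acts on the first `D` levels as an
element of `P`. -/
def gft (d D : ℕ) (P : Subgroup (FAut d D)) : Subgroup (TAut d) where
  carrier := {g | ∀ v : Vertex d, proj d D (sect g v) ∈ P}
  one_mem' := by
    intro v
    rw [sect_one, map_one]
    exact one_mem P
  mul_mem' := by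
    intro g h hg hh v
    rw [sect_mul, map_mul]
    exact mul_mem (hg _) (hh _)
  inv_mem' := by
    intro g hg v
    have h2 : sect g (((g⁻¹ : TAut d) : Equiv.Perm (Vertex d)) v) * sect g⁻¹ v = 1 := by
      rw [← sect_mul, mul_inv_cancel, sect_one]
    have h3 : sect g⁻¹ v = (sect g (((g⁻¹ : TAut d) : Equiv.Perm (Vertex d)) v))⁻¹ :=
      (inv_eq_of_mul_eq_one_right h2).symm
    rw [h3, map_inv]
    exact inv_mem (hg _)

lemma mem_gft {g : TAut d} {D : ℕ} {P : Subgroup (FAut d D)} :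
    g ∈ gft d D P ↔ ∀ v : Vertex d, proj d D (sect g v) ∈ P := Iff.rfl

/-- `P ≤ Aut(T^D)` is a minimal pattern subgroup if `π_D(G_P) = P`. -/
def IsMinimalPattern (d D : ℕ) (P : Subgroup (FAut d D)) : Prop :=
  (gft d D P).map (proj d D) = P

/-- A subgroup of `Aut(T)` is level-transitive if it acts transitively on every level. -/
def LevelTransitive (H : Subgroup (TAut d)) : Prop :=
  ∀ v w : Vertex d, v.length = w.length → ∃ g ∈ H, (g : Equiv.Perm (Vertex d)) v = w

/-- A subgroup of `Aut(T)` is self-similar if it contains all sections of its elements. -/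
def SelfSimilar (H : Subgroup (TAut d)) : Prop :=
  ∀ g ∈ H, ∀ v : Vertex d, sect g v ∈ H

/-- A subgroup of `Aut(T)` is fractal if it is self-similar, level-transitive, and for every
vertex `v` the section map maps the stabilizer of `v` onto the whole group. -/
def Fractal (H : Subgroup (TAut d)) : Prop :=
  SelfSimilar H ∧ LevelTransitive H ∧
    ∀ v : Vertex d, ∀ h ∈ H, ∃ k ∈ H, (k : Equiv.Perm (Vertex d)) v = v ∧ sect k v = h

/-- The geometric product `K_n` of `K` at level `n`: elements of `St(n)` all of whose sections
at level-`n` vertices lie in `K`. -/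
def geom (K : Subgroup (TAut d)) (n : ℕ) : Subgroup (TAut d) where
  carrier := {g | g ∈ lst d n ∧ ∀ v : Vertex d, v.length = n → sect g v ∈ K}
  one_mem' := ⟨one_mem _, fun v _ => by rw [sect_one]; exact one_mem K⟩
  mul_mem' := by
    rintro g h ⟨hg1, hg2⟩ ⟨hh1, hh2⟩
    refine ⟨mul_mem hg1 hh1, fun v hv => ?_⟩
    rw [sect_mul, hh1 v hv.le]
    exact mul_mem (hg2 v hv) (hh2 v hv)
  inv_mem' := by
    rintro g ⟨hg1, hg2⟩
    refine ⟨inv_mem hg1, fun v hv => ?_⟩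
    have hfix : ((g⁻¹ : TAut d) : Equiv.Perm (Vertex d)) v = v :=
      (inv_mem hg1 : g⁻¹ ∈ lst d n) v hv.le
    have h2 : sect g v * sect g⁻¹ v = 1 := by
      have := sect_mul g g⁻¹ v
      rw [mul_inv_cancel, sect_one, hfix] at this
      exact this.symm
    rw [(inv_eq_of_mul_eq_one_right h2).symm]
    exact inv_mem (hg2 v hv)

end TreeFT
namespace TreeFT

variable {d : ℕ}

/-- The congruence topology on `Aut(T)`: the topology of pointwise convergence on the vertex
set (each vertex set carrying the discrete topology); the level stabilizers `St(n)` form a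
base of neighborhoods of the identity for it. -/
instance tautTopologicalSpace (d : ℕ) : TopologicalSpace (TAut d) :=
  TopologicalSpace.induced
    (fun g : TAut d => ((g : Equiv.Perm (Vertex d)) : Vertex d → Vertex d))
    (@Pi.topologicalSpace (Vertex d) (fun _ => Vertex d) (fun _ => ⊥))

lemma isOpen_eval (d : ℕ) (v u : Vertex d) :
    IsOpen {g : TAut d | (g : Equiv.Perm (Vertex d)) v = u} := by
  letI : TopologicalSpace (Vertex d) := ⊥
  haveI : DiscreteTopology (Vertex d) := ⟨rfl⟩
  have h : IsOpen ((fun f : Vertex d → Vertex d => f v) ⁻¹' {u}) :=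
    (continuous_apply (A := fun _ : Vertex d => Vertex d) v).isOpen_preimage ({u} : Set (Vertex d)) (isOpen_discrete _)
  exact isOpen_induced h

lemma isOpen_eval_mem (d : ℕ) (v : Vertex d) (s : Set (Vertex d)) :
    IsOpen {g : TAut d | (g : Equiv.Perm (Vertex d)) v ∈ s} := by
  have h : {g : TAut d | (g : Equiv.Perm (Vertex d)) v ∈ s}
      = ⋃ u ∈ s, {g : TAut d | (g : Equiv.Perm (Vertex d)) v = u} := by
    ext g; simp
  rw [h]
  exact isOpen_biUnion fun u _ => isOpen_eval d v u

lemma continuous_into_vertex {X : Type*} [TopologicalSpace X] (f : X → Vertex d)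
    (h : ∀ u : Vertex d, IsOpen (f ⁻¹' {u})) :
    @Continuous X (Vertex d) _ ⊥ f := by
  rw [continuous_def]
  intro s _
  have hs : f ⁻¹' s = ⋃ u ∈ s, f ⁻¹' {u} := by
    ext x; simp
  rw [hs]
  exact isOpen_biUnion fun u _ => h u

instance tautContinuousMul (d : ℕ) : ContinuousMul (TAut d) := by
  constructor
  · -- continuity of multiplication
    apply continuous_induced_rng.2
    apply @continuous_pi _ _ _ _ (fun _ => (⊥ : TopologicalSpace (Vertex d)))
    intro v
    apply continuous_into_vertex
      (f := fun p : TAut d × TAut d => ((p.1 * p.2 : TAut d) : Equiv.Perm (Vertex d)) v)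
    intro u
    have h : (fun p : TAut d × TAut d =>
          ((p.1 * p.2 : TAut d) : Equiv.Perm (Vertex d)) v) ⁻¹' {u}
        = ⋃ w : Vertex d, ({g : TAut d | (g : Equiv.Perm (Vertex d)) w = u} ×ˢ
            {h : TAut d | (h : Equiv.Perm (Vertex d)) v = w}) := by
      ext p
      simp only [Set.mem_preimage, Set.mem_singleton_iff, Set.mem_iUnion, Set.mem_prod,
        Set.mem_setOf_eq]
      constructor
      · intro hp
        exact ⟨(p.2 : Equiv.Perm (Vertex d)) v, hp, rfl⟩
      · rintro ⟨w, hw1, hw2⟩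
        show (p.1 : Equiv.Perm (Vertex d)) ((p.2 : Equiv.Perm (Vertex d)) v) = u
        rw [hw2]; exact hw1
    rw [h]
    exact isOpen_iUnion fun w => (isOpen_eval d w u).prod (isOpen_eval d v w)

instance tautContinuousInv (d : ℕ) : ContinuousInv (TAut d) := by
  constructor
  · -- continuity of inversion
    apply continuous_induced_rng.2
    apply @continuous_pi _ _ _ _ (fun _ => (⊥ : TopologicalSpace (Vertex d)))
    intro v
    apply continuous_into_vertex
      (f := fun g : TAut d => ((g⁻¹ : TAut d) : Equiv.Perm (Vertex d)) v)
    intro u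
    have h : (fun g : TAut d => ((g⁻¹ : TAut d) : Equiv.Perm (Vertex d)) v) ⁻¹' {u}
        = {g : TAut d | (g : Equiv.Perm (Vertex d)) u = v} := by
      ext g
      simp only [Set.mem_preimage, Set.mem_singleton_iff, Set.mem_setOf_eq,
        InvMemClass.coe_inv]
      constructor
      · intro hg; rw [← hg, Equiv.Perm.apply_inv_self]
      · intro hg; rw [← hg, Equiv.Perm.inv_apply_self]
    rw [h]
    exact isOpen_eval d u v

instance tautTopologicalGroup (d : ℕ) : IsTopologicalGroup (TAut d) := ⟨⟩

/-- A subgroup of `Aut(T)` (viewed as a topological group with the congruence topology) is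
topologically finitely generated if it contains a finitely generated dense subgroup. -/
def TopFG (H : Subgroup (TAut d)) : Prop :=
  ∃ S : Set ↥H, S.Finite ∧ Dense ((Subgroup.closure S : Subgroup ↥H) : Set ↥H)

/-- A profinite group is just-infinite if it is infinite and every nontrivial closed normal
subgroup has finite index. -/
def JustInfinite (H : Subgroup (TAut d)) : Prop :=
  Infinite ↥H ∧ ∀ N : Subgroup ↥H, N.Normal → IsClosed (N : Set ↥H) → N ≠ ⊥ → N.index ≠ 0

/-- A profinite group is strongly complete if every subgroup of finite index is open. -/
def StronglyComplete (H : Subgroup (TAut d)) : Prop :=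
  ∀ N : Subgroup ↥H, N.index ≠ 0 → IsOpen (N : Set ↥H)

end TreeFT

/-!
Level transitivity is proved level by level. Suppose `G` is transitive on level `n`. If some
element of `G` fixing the first `n` levels moves a vertex of level `n + 1`, it fixes a
level-`n` vertex `w` and rotates its children by a nonzero `k ∈ ℤ/p`; since `p` is prime, its
powers realise every rotation below `w`, and conjugating by `G` gives this at every level-`n`
vertex, so `G` is transitive on level `n + 1`. Otherwise, by self-similarity, every element of
`G` fixing the first `n` levels fixes everything: `G` embeds into the permutations of the finite
set of vertices of length at most `n` and is finite.
-/

namespace TreeFT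

variable {d : ℕ}

lemma apply_append_eq_sect (g : TAut d) (v w : Vertex d) :
    (g : Equiv.Perm (Vertex d)) (v ++ w) =
      (g : Equiv.Perm (Vertex d)) v ++ (sect g v : Equiv.Perm (Vertex d)) w :=
  apply_append g v w

lemma exists_apply_append_singleton (g : TAut d) (v : Vertex d) (x : Fin d) :
    ∃ c, (g : Equiv.Perm (Vertex d)) (v ++ [x]) = (g : Equiv.Perm (Vertex d)) v ++ [c] := by
  obtain ⟨c, hc⟩ := List.length_eq_one_iff.mp (length_apply (sect g v) [x])
  exact ⟨c, by rw [apply_append_eq_sect, hc]⟩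

lemma exists_eq_append_singleton {u : Vertex d} {n : ℕ} (hu : u.length = n + 1) :
    ∃ w x, w.length = n ∧ u = w ++ [x] := by
  obtain rfl | ⟨w, x, rfl⟩ := List.eq_nil_or_concat' u
  · simp at hu
  · exact ⟨w, x, by simpa using hu, rfl⟩

section LevelStabilizer

lemma lst_anti {m n : ℕ} (hmn : m ≤ n) : lst d n ≤ lst d m :=
  fun _ hg v hv => hg v (hv.trans hmn)

lemma mem_lst_succ {g : TAut d} {n : ℕ} (hg : g ∈ lst d n)
    (hchild : ∀ w : Vertex d, w.length = n → ∀ x : Fin d,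
      (g : Equiv.Perm (Vertex d)) (w ++ [x]) = w ++ [x]) :
    g ∈ lst d (n + 1) := by
  intro u hu
  rcases Nat.lt_or_eq_of_le hu with hlt | heq
  · exact hg u (by omega)
  · obtain ⟨w, x, hw, rfl⟩ := exists_eq_append_singleton heq
    exact hchild w hw x

lemma sect_mem_lst {g : TAut d} {v : Vertex d} {n : ℕ} (hg : g ∈ lst d (v.length + n)) :
    sect g v ∈ lst d n := fun w hw => by
  rw [sect_apply, hg (v ++ w) (by simp [hw])]
  exact List.drop_left

lemma mem_lst_succ_of_sect {g : TAut d} {n : ℕ} (hg : g ∈ lst d 1)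
    (hsect : ∀ a : Fin d, sect g [a] ∈ lst d n) : g ∈ lst d (n + 1) := by
  rintro (_ | ⟨a, w⟩) hw
  · exact hg [] (Nat.zero_le _)
  · rw [← List.singleton_append, apply_append_eq_sect, hg [a] le_rfl,
      hsect a w (by simpa using hw)]

lemma eq_one_of_forall_mem_lst {g : TAut d} (hg : ∀ n, g ∈ lst d n) : g = 1 :=
  Subtype.ext <| Equiv.ext fun v => hg v.length v le_rfl

lemma inv_mul_mem_lst {g h : TAut d} {n : ℕ}
    (hgh : ∀ v : Vertex d, v.length ≤ n →
      (g : Equiv.Perm (Vertex d)) v = (h : Equiv.Perm (Vertex d)) v) :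
    g⁻¹ * h ∈ lst d n := fun v hv => by
  simp only [MulMemClass.coe_mul, InvMemClass.coe_inv, Equiv.Perm.mul_apply, ← hgh v hv,
    Equiv.Perm.inv_apply_self]

end LevelStabilizer

section Rigid

variable {G : Subgroup (TAut d)} {n : ℕ}

/-- The level-one sections of an element fixing the first `n + 1` levels fix the first `n`
levels, so by self-similarity `hrigid` propagates down the tree one level at a time. -/
lemma eq_one_of_mem_lst_of_rigid (hss : SelfSimilar G)
    (hrigid : ∀ g ∈ G, g ∈ lst d n → g ∈ lst d (n + 1)) :
    ∀ g ∈ G, g ∈ lst d n → g = 1 := by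
  have hdeep : ∀ m, ∀ g ∈ G, g ∈ lst d n → g ∈ lst d (n + m) := by
    intro m
    induction m with
    | zero => exact fun _ _ hgn => hgn
    | succ m ih =>
      intro g hg hgn
      have hg1 : g ∈ lst d (1 + n) := add_comm n 1 ▸ hrigid g hg hgn
      exact mem_lst_succ_of_sect (lst_anti (Nat.le_add_right 1 n) hg1)
        fun a => ih _ (hss g hg [a]) (sect_mem_lst hg1)
  exact fun g hg hgn =>
    eq_one_of_forall_mem_lst fun m => lst_anti (Nat.le_add_left m n) (hdeep m g hg hgn)

lemma finite_of_forall_mem_lst_eq_one (htriv : ∀ g ∈ G, g ∈ lst d n → g = 1) : Finite G := by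
  let S := {v : Vertex d | v.length ≤ n}
  have : Finite S := (List.finite_length_le (Fin d) n).to_subtype
  let restrict : G → S → S := fun g v =>
    ⟨((g : TAut d) : Equiv.Perm (Vertex d)) v, (length_apply (g : TAut d) v).trans_le v.2⟩
  refine Finite.of_injective restrict fun g h hgh => Subtype.ext ?_
  refine inv_mul_eq_one.mp <| htriv _ (mul_mem (inv_mem g.2) h.2) <| inv_mul_mem_lst ?_
  exact fun v hv => congrArg Subtype.val (congrFun hgh ⟨v, hv⟩)

end Rigid

section Transitivity

variable {G : Subgroup (TAut d)} {n : ℕ}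

def IsTransitiveOnLevel (G : Subgroup (TAut d)) (n : ℕ) : Prop :=
  ∀ v w : Vertex d, v.length = n → w.length = n → ∃ g ∈ G, (g : Equiv.Perm (Vertex d)) v = w

/-- An automorphism mapping a child of `w` to a child of `w` fixes `w`, so this says that the
stabiliser of `w` in `G` is transitive on the children of `w`. -/
def IsTransitiveBelow (G : Subgroup (TAut d)) (w : Vertex d) : Prop :=
  ∀ x y : Fin d, ∃ g ∈ G, (g : Equiv.Perm (Vertex d)) (w ++ [x]) = w ++ [y]

lemma levelTransitive_of_forall_isTransitiveOnLevel (h : ∀ n, IsTransitiveOnLevel G n) :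
    LevelTransitive G :=
  fun v w hvw => h _ v w rfl hvw.symm

lemma isTransitiveOnLevel_zero : IsTransitiveOnLevel G 0 := by
  intro v w hv hw
  rw [List.length_eq_zero_iff.mp hv, List.length_eq_zero_iff.mp hw]
  exact ⟨1, one_mem G, rfl⟩

lemma IsTransitiveBelow.of_apply_eq {a : TAut d} (ha : a ∈ G) {w w₀ : Vertex d}
    (haw : (a : Equiv.Perm (Vertex d)) w = w₀) (h : IsTransitiveBelow G w₀) :
    IsTransitiveBelow G w := by
  intro x y
  obtain ⟨cx, hx⟩ := exists_apply_append_singleton a w x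
  obtain ⟨cy, hy⟩ := exists_apply_append_singleton a w y
  obtain ⟨b, hb, hbw⟩ := h cx cy
  refine ⟨a⁻¹ * b * a, mul_mem (mul_mem (inv_mem ha) hb) ha, ?_⟩
  simp only [MulMemClass.coe_mul, InvMemClass.coe_inv, Equiv.Perm.mul_apply]
  rw [hx, haw, hbw, ← haw, ← hy, Equiv.Perm.inv_apply_self]

lemma IsTransitiveOnLevel.succ (hn : IsTransitiveOnLevel G n) {w₀ : Vertex d}
    (hw₀ : w₀.length = n) (hbelow : IsTransitiveBelow G w₀) :
    IsTransitiveOnLevel G (n + 1) := by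
  intro v w hv hw
  obtain ⟨v', a, hv', rfl⟩ := exists_eq_append_singleton hv
  obtain ⟨w', b, hw', rfl⟩ := exists_eq_append_singleton hw
  obtain ⟨g, hg, hgv⟩ := hn v' w' hv' hw'
  obtain ⟨c, hc⟩ := exists_apply_append_singleton g v' a
  obtain ⟨a', ha', haw⟩ := hn w' w₀ hw' hw₀
  obtain ⟨h, hh, hhw⟩ := hbelow.of_apply_eq ha' haw c b
  refine ⟨h * g, mul_mem hh hg, ?_⟩
  rw [MulMemClass.coe_mul, Equiv.Perm.mul_apply, hc, hgv, hhw]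

end Transitivity

section Rotation

variable {p : ℕ} [NeZero p]

lemma pow_apply_append_singleton {g : TAut p} {w : Vertex p} {k : Fin p}
    (hg : ∀ x, (g : Equiv.Perm (Vertex p)) (w ++ [x]) = w ++ [x + k]) (m : ℕ) (x : Fin p) :
    ((g ^ m : TAut p) : Equiv.Perm (Vertex p)) (w ++ [x]) = w ++ [x + m • k] := by
  induction m generalizing x with
  | zero => simp
  | succ m ih =>
    rw [pow_succ, MulMemClass.coe_mul, Equiv.Perm.mul_apply, hg, ih, succ_nsmul, add_assoc,
      add_comm k]

lemma isTransitiveBelow_of_rotation (hp : p.Prime) {G : Subgroup (TAut p)} {g : TAut p}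
    (hg : g ∈ G) {w : Vertex p} {k : Fin p} (hk : k ≠ 0)
    (hrot : ∀ x, (g : Equiv.Perm (Vertex p)) (w ++ [x]) = w ++ [x + k]) :
    IsTransitiveBelow G w := by
  have : Fact p.Prime := ⟨hp⟩
  intro x y
  obtain ⟨m, hm⟩ := (AddSubmonoid.mem_multiples_iff _ _).mp
    (mem_multiples_of_prime_card (Nat.card_eq_fintype_card.trans (Fintype.card_fin p)) hk
      (g' := y - x))
  exact ⟨g ^ m, pow_mem hg m, by rw [pow_apply_append_singleton hrot, hm, add_sub_cancel]⟩

end Rotation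

/-- Let `p` be a prime, `T` the `p`-regular rooted tree, and `G ≤ W_p` an
infinite self-similar subgroup, where `W_p` consists of the automorphisms all of whose labels
are powers of the cycle `(1 2 … p)` (acting on `Fin p` as `x ↦ x + k`).  Then `G` is
level-transitive. -/
theorem statement_11 (p : ℕ) (hp : p.Prime) (G : Subgroup (TAut p))
    (hWp : ∀ g ∈ G, ∀ v : Vertex p, ∃ k : Fin p, ∀ x : Fin p,
      (g : Equiv.Perm (Vertex p)) (v ++ [x]) = (g : Equiv.Perm (Vertex p)) v ++ [x + k])
    (hss : SelfSimilar G) (hinf : Infinite ↥G) :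
    LevelTransitive G := by
  have : NeZero p := ⟨hp.ne_zero⟩
  refine levelTransitive_of_forall_isTransitiveOnLevel fun n => ?_
  induction n with
  | zero => exact isTransitiveOnLevel_zero
  | succ n ih =>
    by_cases hrigid : ∀ g ∈ G, g ∈ lst p n → ∀ w : Vertex p, w.length = n → ∀ x : Fin p,
        (g : Equiv.Perm (Vertex p)) (w ++ [x]) = w ++ [x]
    · have htriv := eq_one_of_mem_lst_of_rigid hss fun g hg hgn =>
        mem_lst_succ hgn (hrigid g hg hgn)
      exact (not_finite_iff_infinite.mpr hinf (finite_of_forall_mem_lst_eq_one htriv)).elim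
    · push Not at hrigid
      obtain ⟨g, hg, hgn, w, hw, x, hx⟩ := hrigid
      obtain ⟨k, hk⟩ := hWp g hg w
      rw [hgn w hw.le] at hk
      have hk0 : k ≠ 0 := by
        rintro rfl
        exact hx (by simpa using hk x)
      exact ih.succ hw (isTransitiveBelow_of_rotation hp hg hk0 hk)

end TreeFT
end
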